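/- arXiv:2301.04949 — 5 statements merged into one kernel-verified Lean document; each statement's English description precedes it below -/
import Mathlib

section
/- Let X = {x_0,...,x_m}, let c, d ∈ ℝ^p⟨⟨X⟩⟩ and e ∈ ℝ^m⟨⟨X⟩⟩. Then the multiplicative mixed composition product distributes over the shuffle product on the right: (c ⧢ d) ⟲ e = (c ⟲ e) ⧢ (d ⟲ e). -/
open scoped BigOperators

namespace CFS

noncomputable section

/-- The alphabet `X = {x_0, x_1, ..., x_m}`: `none` encodes `x_0`, `some i` encodes `x_{i+1}`. -/
abbrev Letter (m : ℕ) := Option (Fin m)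

/-- Words over the alphabet `X`. -/
abbrev Word (m : ℕ) := List (Letter m)

/-- Formal power series `ℝ⟨⟨X⟩⟩`: coefficient functions on words. -/
abbrev FPS (m : ℕ) := Word m → ℝ

/-- Tuples of series `ℝ^ℓ⟨⟨X⟩⟩`. -/
abbrev FPST (m ℓ : ℕ) := Fin ℓ → FPS m

/-- The series `𝟙` (coefficient 1 at the empty word). -/
def unit (m : ℕ) : FPS m := fun w => if w = [] then 1 else 0

/-- The tuple `1l = (𝟙,...,𝟙)`. -/
def unitT (m ℓ : ℕ) : FPST m ℓ := fun _ => unit m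

/-- Left concatenation of a series by the letter `x`. -/
def lc {m : ℕ} (x : Letter m) (c : FPS m) : FPS m :=
  fun w => match w with
  | [] => 0
  | y :: u => if y = x then c u else 0

/-- The shuffle product `c ⧢ d`, given by the coefficientwise recursion dual to the
word recursion `(x u) ⧢ (y v) = x(u ⧢ (y v)) + y((x u) ⧢ v)`, `𝟙 ⧢ η = η ⧢ 𝟙 = η`:
left shifts act as derivations. -/
def sh {m : ℕ} : FPS m → FPS m → FPS m
  | c, d, [] => c [] * d []
  | c, d, x :: w => sh (fun u => c (x :: u)) d w + sh c (fun u => d (x :: u)) w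

/-- Componentwise shuffle on tuples. -/
def shT {m ℓ : ℕ} (c d : FPST m ℓ) : FPST m ℓ := fun i => sh (c i) (d i)

/-- A tuple is purely improper when each component has a nonzero constant coefficient. -/
def PurelyImproper {m ℓ : ℕ} (c : FPST m ℓ) : Prop := ∀ i, c i [] ≠ 0

/-- `η ⟲ d` on a word `η`. -/
def wmc {m : ℕ} (d : FPST m m) : Word m → FPS m
  | [] => unit m
  | none :: η => lc none (wmc d η)
  | some i :: η => lc (some i) (sh (d i) (wmc d η))

/-- Multiplicative mixed composition product `c ⟲ d := Σ_η c(η)(η ⟲ d)`.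
Since `η ⟲ d` is supported on words of length `≥ |η|`, only words `η` of length
`≤ |w|` contribute to the coefficient at `w`. -/
def mc {m : ℕ} (c : FPS m) (d : FPST m m) : FPS m :=
  fun w => ∑ k ∈ Finset.range (w.length + 1),
    ∑ η : Fin k → Letter m, c (List.ofFn η) * wmc d (List.ofFn η) w

/-- `⟲` on tuples (componentwise in the left argument). -/
def mcT {m ℓ : ℕ} (c : FPST m ℓ) (d : FPST m m) : FPST m ℓ := fun i => mc (c i) d

/-- `ψ_d(η)(𝟙)`, where `ψ_d(x'_0)(e) = x_0(𝟙 ⧢ e)` and `ψ_d(x'_i)(e) = x_0(d_i ⧢ e)`. -/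
def wcomp {m ℓ : ℕ} (d : FPST m ℓ) : Word ℓ → FPS m
  | [] => unit m
  | none :: η => lc none (sh (unit m) (wcomp d η))
  | some i :: η => lc none (sh (d i) (wcomp d η))

/-- Composition product `c ∘ d := Σ_η c(η) ψ_d(η)(𝟙)`; since `ψ_d(η)(𝟙)` is supported
on words of length `≥ |η|`, only `η` with `|η| ≤ |w|` contribute at `w`. -/
def comp {m ℓ : ℕ} (c : FPS ℓ) (d : FPST m ℓ) : FPS m :=
  fun w => ∑ k ∈ Finset.range (w.length + 1),
    ∑ η : Fin k → Letter ℓ, c (List.ofFn η) * wcomp d (List.ofFn η) w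

/-- `∘` componentwise in the left argument. -/
def compT {m ℓ q : ℕ} (c : FPST ℓ q) (d : FPST m ℓ) : FPST m q := fun i => comp (c i) d

/-- Multiplicative composition product `c ⋆ d := d ⧢ (c ⟲ d)`. -/
def star {m : ℕ} (c d : FPST m m) : FPST m m := fun i => sh (d i) (mc (c i) d)

/-- Iteration of `e ↦ c(𝟙)⁻¹ ⬝ (𝟙 − c' ⧢ e)` (with `c'` the proper part of `c`),
whose fixed point is the shuffle inverse of `c` when `c(𝟙) ≠ 0`. -/
def shInvAux {m : ℕ} (c : FPS m) : ℕ → FPS m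
  | 0 => fun _ => 0
  | n + 1 => fun w =>
      (c [])⁻¹ * (unit m w - sh (fun u => if u = [] then 0 else c u) (shInvAux c n) w)

/-- Shuffle inverse `c^{⧢-1}` (the coefficient at `w` stabilizes after `|w|+1` iterations). -/
def shInv {m : ℕ} (c : FPS m) : FPS m := fun w => shInvAux c (w.length + 1) w

/-- Componentwise shuffle inverse of a tuple. -/
def shInvT {m ℓ : ℕ} (c : FPST m ℓ) : FPST m ℓ := fun i => shInv (c i)

/-- Iteration of the strong contraction `e ↦ d^{⧢-1} ⟲ e`, whose fixed point is `d^{⋆-1}`. -/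
def starInvAux {m : ℕ} (d : FPST m m) : ℕ → FPST m m
  | 0 => fun _ _ => 0
  | n + 1 => mcT (shInvT d) (starInvAux d n)

/-- `⋆`-inverse `d^{⋆-1}` of a purely improper tuple. -/
def starInv {m : ℕ} (d : FPST m m) : FPST m m := fun i w => starInvAux d (w.length + 1) i w

/-- Multiplicative dynamic feedback product `c @̌ d := c ⟲ (d^{⧢-1} ∘ c)^{⋆-1}`. -/
def fb {m q : ℕ} (c : FPST m q) (d : FPST q m) : FPST m q :=
  mcT c (starInv (compT (shInvT d) c))

/-- Valuation: minimal length of a word in the support (`⊤` for the zero series). -/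
def val {m : ℕ} (c : FPS m) : ℕ∞ :=
  sInf ((fun w : Word m => (w.length : ℕ∞)) '' {w | c w ≠ 0})

/-- Valuation of a tuple: minimum over components. -/
def valT {m ℓ : ℕ} (c : FPST m ℓ) : ℕ∞ := ⨅ i, val (c i)

/-- `σ^v` for `v : ℕ∞`, with `σ^∞ = 0`; so `κ(a,b) = enpow σ (val (a-b))`. -/
def enpow (σ : ℝ) (v : ℕ∞) : ℝ := if v = ⊤ then 0 else σ ^ v.toNat

/-- The natural part `c_N`: restriction of `c` to words in the letter `x_0` only. -/
def natPart {m : ℕ} (c : FPS m) : FPS m :=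
  fun w => if ∀ x ∈ w, x = (none : Letter m) then c w else 0

/-- The forced part `c_F := c − c_N`. -/
def forcedPart {m : ℕ} (c : FPS m) : FPS m := fun w => c w - natPart c w

/-- `c` has (finite) class `r ≥ 1`: `supp(c_F) ⊆ x_0^{r-1}X^+` and `supp(c_F) ⊄ x_0^r X^+`. -/
def hasClassF {m : ℕ} (c : FPS m) (r : ℕ) : Prop :=
  1 ≤ r ∧
  (∀ w, forcedPart c w ≠ 0 → ∃ v, v ≠ [] ∧ w = List.replicate (r - 1) (none : Letter m) ++ v) ∧
  ¬ (∀ w, forcedPart c w ≠ 0 → ∃ v, v ≠ [] ∧ w = List.replicate r (none : Letter m) ++ v)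

/-- `𝒞(c) = r` for `r : ℕ∞`, with `𝒞(c) = ∞` iff `c_F = 0`. -/
def hasClass {m : ℕ} (c : FPS m) (r : ℕ∞) : Prop :=
  (r = ⊤ ∧ forcedPart c = fun _ => 0) ∨ ∃ n : ℕ, r = (n : ℕ∞) ∧ hasClassF c n

/-- `c` has relative degree `r`: `𝒞(c) = r` and `x_0^{r-1} x_1 ∈ supp(c_F)`. -/
def hasRelDeg (c : FPS 1) (r : ℕ) : Prop :=
  hasClassF c r ∧
  forcedPart c (List.replicate (r - 1) (none : Letter 1) ++ [some 0]) ≠ 0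

/-- `⟲` for single (SISO, `m = 1`) series. -/
def mc1 (c d : FPS 1) : FPS 1 := mc c (fun _ => d)

/-- The multiplicative dynamic feedback product for single (SISO) series. -/
def fb1 (c d : FPS 1) : FPS 1 :=
  mc c (starInv (compT (fun _ : Fin 1 => shInv d) (fun _ : Fin 1 => c)))

end

end CFS

section Helpers
open CFS

variable {m : ℕ}

lemma sh_congr : ∀ (w : Word m) (c c' d d' : FPS m),
    (∀ u : Word m, u.length ≤ w.length → c u = c' u) →
    (∀ u : Word m, u.length ≤ w.length → d u = d' u) →
    sh c d w = sh c' d' w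
  | [], c, c', d, d', hc, hd => by
      simp [sh, hc [] (by simp), hd [] (by simp)]
  | x :: w, c, c', d, d', hc, hd => by
      simp only [sh]
      rw [sh_congr w _ _ _ _
          (fun u hu => hc (x :: u) (by simpa using Nat.succ_le_succ hu))
          (fun u hu => hd u (hu.trans (Nat.le_succ _))),
        sh_congr w _ _ _ _
          (fun u hu => hc u (hu.trans (Nat.le_succ _)))
          (fun u hu => hd (x :: u) (by simpa using Nat.succ_le_succ hu))]

lemma sh_zero_right : ∀ (w : Word m) (c : FPS m), sh c (fun _ => (0:ℝ)) w = 0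
  | [], c => by simp [sh]
  | x :: w, c => by simp [sh, sh_zero_right w]

lemma sh_add_right : ∀ (w : Word m) (c d d' : FPS m),
    sh c (fun u => d u + d' u) w = sh c d w + sh c d' w
  | [], c, d, d' => by simp [sh]; ring
  | x :: w, c, d, d' => by
      simp only [sh]
      rw [sh_add_right w, sh_add_right w]; ring

lemma sh_comm : ∀ (w : Word m) (c d : FPS m), sh c d w = sh d c w
  | [], c, d => by simp [sh]; ring
  | x :: w, c, d => by
      simp only [sh]
      rw [sh_comm w, sh_comm w c]; ring

lemma sh_add_left (w : Word m) (c c' d : FPS m) :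
    sh (fun u => c u + c' u) d w = sh c d w + sh c' d w := by
  rw [sh_comm, sh_add_right, sh_comm w d c, sh_comm w d c']

lemma sh_smul_right : ∀ (w : Word m) (r : ℝ) (c d : FPS m),
    sh c (fun u => r * d u) w = r * sh c d w
  | [], r, c, d => by simp [sh]; ring
  | x :: w, r, c, d => by
      simp only [sh]
      rw [sh_smul_right w, sh_smul_right w]; ring

lemma sh_sum_right {ι : Type*} (s : Finset ι) (w : Word m) (c : FPS m) (f : ι → FPS m) :
    sh c (fun u => ∑ i ∈ s, f i u) w = ∑ i ∈ s, sh c (f i) w := by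
  classical
  induction s using Finset.induction_on with
  | empty => simp [sh_zero_right]
  | insert _ _ h ih =>
      simp only [Finset.sum_insert h]
      rw [sh_add_right, ih]

lemma sh_assoc : ∀ (w : Word m) (a b c : FPS m), sh (sh a b) c w = sh a (sh b c) w
  | [], a, b, c => by simp [sh]; ring
  | x :: w, a, b, c => by
      simp only [sh]
      rw [sh_add_left, sh_add_right, sh_assoc w, sh_assoc w, sh_assoc w]
      ring

lemma sh_left_comm (w : Word m) (a b c : FPS m) :
    sh a (sh b c) w = sh b (sh a c) w := by
  have hab : sh a b = sh b a := funext fun u => sh_comm u a b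
  rw [← sh_assoc w a b c, hab, sh_assoc]

end Helpers

section Helpers2
open CFS

variable {m : ℕ}

lemma wmc_support (e : FPST m m) : ∀ (η u : Word m), u.length < η.length → wmc e η u = 0
  | [], u, h => by simp at h
  | none :: η, [], _ => by simp [wmc, lc]
  | none :: η, z :: u, h => by
      by_cases hz : z = none
      · subst hz
        simp only [wmc, lc, if_pos rfl]
        exact wmc_support e η u (by simp at h ⊢; omega)
      · simp [wmc, lc, hz]
  | some i :: η, [], _ => by simp [wmc, lc]
  | some i :: η, z :: u, h => by
      by_cases hz : z = some i
      · subst hz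
        have hlen : u.length < η.length := by simp at h ⊢; omega
        simp only [wmc, lc, if_pos rfl]
        calc sh (e i) (wmc e η) u
            = sh (e i) (fun _ => (0:ℝ)) u :=
              sh_congr u _ _ _ _ (fun v _ => rfl)
                (fun v hv => wmc_support e η v (lt_of_le_of_lt hv hlen))
          _ = 0 := sh_zero_right u _
      · simp [wmc, lc, hz]

lemma mc_nil (c : FPS m) (e : FPST m m) : mc c e [] = c [] := by
  simp [mc, wmc, unit]

lemma mc_trunc (c : FPS m) (e : FPST m m) (N : ℕ) (u : Word m) (hu : u.length ≤ N) :
    mc c e u = ∑ k ∈ Finset.range (N + 1),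
      ∑ η : Fin k → Letter m, c (List.ofFn η) * wmc e (List.ofFn η) u := by
  rw [mc]
  apply Finset.sum_subset
  · exact Finset.range_subset_range.2 (by omega)
  · intro k hk hk'
    have hlt : u.length < k := by
      simp only [Finset.mem_range] at hk hk'; omega
    refine Finset.sum_eq_zero fun η _ => ?_
    rw [wmc_support e _ _ (by simpa using hlt), mul_zero]

lemma mc_add_left (c c' : FPS m) (e : FPST m m) (w : Word m) :
    mc (fun u => c u + c' u) e w = mc c e w + mc c' e w := by
  simp [mc, add_mul, Finset.sum_add_distrib]

lemma sum_fn_succ {α : Type*} [Fintype α] (k : ℕ) (f : (Fin (k+1) → α) → ℝ) :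
    ∑ η : Fin (k+1) → α, f η = ∑ y : α, ∑ η : Fin k → α, f (Fin.cons y η) := by
  rw [show (∑ y : α, ∑ η : Fin k → α, f (Fin.cons y η))
      = ∑ p : α × (Fin k → α), f (Fin.cons p.1 p.2) from
      (Fintype.sum_prod_type fun p => f (Fin.cons p.1 p.2)).symm,
    ← Equiv.sum_comp (Fin.consEquiv fun _ : Fin (k+1) => α) (fun η => f η)]
  rfl

lemma mc_cons_aux (c : FPS m) (e : FPST m m) (x : Letter m) (w : Word m) :
    mc c e (x :: w) = ∑ k ∈ Finset.range (w.length + 1), ∑ y : Letter m,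
      ∑ η : Fin k → Letter m,
        c (y :: List.ofFn η) * wmc e (y :: List.ofFn η) (x :: w) := by
  rw [mc]
  simp only [List.length_cons]
  rw [Finset.sum_range_succ']
  have h0 : (∑ η : Fin 0 → Letter m,
      c (List.ofFn η) * wmc e (List.ofFn η) (x :: w)) = 0 := by
    simp [wmc, unit]
  rw [h0, add_zero]
  refine Finset.sum_congr rfl fun k _ => ?_
  rw [sum_fn_succ]
  refine Finset.sum_congr rfl fun y _ => Finset.sum_congr rfl fun η _ => ?_
  simp [List.ofFn_succ, Fin.cons_zero, Fin.cons_succ]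

end Helpers2

section Helpers3
open CFS

variable {m : ℕ}

lemma sh_sum_smul_right {ι : Type*} (s : Finset ι) (w : Word m) (c : FPS m)
    (r : ι → ℝ) (f : ι → FPS m) :
    sh c (fun u => ∑ i ∈ s, r i * f i u) w = ∑ i ∈ s, r i * sh c (f i) w := by
  classical
  induction s using Finset.induction_on with
  | empty => simp [sh_zero_right]
  | insert _ _ h ih =>
      simp only [Finset.sum_insert h]
      rw [sh_add_right, sh_smul_right, ih]

lemma mc_cons_none (c : FPS m) (e : FPST m m) (w : Word m) :
    mc c e ((none : Letter m) :: w) = mc (fun u => c ((none : Letter m) :: u)) e w := by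
  rw [mc_cons_aux, mc]
  refine Finset.sum_congr rfl fun k _ => ?_
  rw [Fintype.sum_option]
  simp [wmc, lc]

lemma mc_cons_some (c : FPS m) (e : FPST m m) (i : Fin m) (w : Word m) :
    mc c e ((some i : Letter m) :: w)
      = sh (e i) (mc (fun u => c ((some i : Letter m) :: u)) e) w := by
  rw [mc_cons_aux]
  have hstep : ∀ k : ℕ, (∑ y : Letter m, ∑ η : Fin k → Letter m,
        c (y :: List.ofFn η) * wmc e (y :: List.ofFn η) ((some i : Letter m) :: w))
      = ∑ η : Fin k → Letter m,
          c ((some i : Letter m) :: List.ofFn η) * sh (e i) (wmc e (List.ofFn η)) w := by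
    intro k
    rw [Fintype.sum_option]
    have h0 : (∑ η : Fin k → Letter m, c ((none : Letter m) :: List.ofFn η) *
        wmc e ((none : Letter m) :: List.ofFn η) ((some i : Letter m) :: w)) = 0 := by
      simp [wmc, lc]
    rw [h0, zero_add]
    rw [Finset.sum_eq_single i]
    · simp [wmc, lc]
    · intro j _ hj
      have : ¬ ((some i : Letter m) = some j) := by simpa using (Ne.symm hj)
      simp [wmc, lc, this]
    · intro h; exact absurd (Finset.mem_univ i) h
  rw [Finset.sum_congr rfl fun k _ => hstep k]
  have hF : sh (e i) (mc (fun u => c ((some i : Letter m) :: u)) e) w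
      = sh (e i) (fun u => ∑ k ∈ Finset.range (w.length + 1),
          ∑ η : Fin k → Letter m,
            c ((some i : Letter m) :: List.ofFn η) * wmc e (List.ofFn η) u) w :=
    sh_congr w _ _ _ _ (fun v _ => rfl) (fun u hu => mc_trunc _ e w.length u hu)
  rw [hF]
  rw [sh_sum_right (Finset.range (w.length + 1)) w (e i)
    (fun k u => ∑ η : Fin k → Letter m,
      c ((some i : Letter m) :: List.ofFn η) * wmc e (List.ofFn η) u)]
  refine Finset.sum_congr rfl fun k _ => ?_
  rw [sh_sum_smul_right]

end Helpers3

section Main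
open CFS

variable {m : ℕ}

lemma mc_sh_key (e : FPST m m) : ∀ (n : ℕ) (w : Word m), w.length < n → ∀ c d : FPS m,
    mc (sh c d) e w = sh (mc c e) (mc d e) w := by
  intro n
  induction n with
  | zero => intro w hw; omega
  | succ n ih =>
    intro w hw c d
    match w with
    | [] => simp [mc_nil, sh]
    | (none : Letter m) :: w' =>
      have hw' : w'.length < n := by simp at hw; omega
      have hsplit : (fun u => sh c d ((none : Letter m) :: u)) =
          fun u => sh (fun v => c ((none : Letter m) :: v)) d u
            + sh c (fun v => d ((none : Letter m) :: v)) u := by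
        funext u; simp [sh]
      have hcc : (fun u => mc c e ((none : Letter m) :: u))
          = mc (fun v => c ((none : Letter m) :: v)) e := funext fun u => mc_cons_none c e u
      have hdd : (fun u => mc d e ((none : Letter m) :: u))
          = mc (fun v => d ((none : Letter m) :: v)) e := funext fun u => mc_cons_none d e u
      calc mc (sh c d) e ((none : Letter m) :: w')
          = mc (fun u => sh c d ((none : Letter m) :: u)) e w' := mc_cons_none _ e w'
        _ = mc (fun u => sh (fun v => c ((none : Letter m) :: v)) d u
              + sh c (fun v => d ((none : Letter m) :: v)) u) e w' := by rw [hsplit]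
        _ = mc (sh (fun v => c ((none : Letter m) :: v)) d) e w'
              + mc (sh c (fun v => d ((none : Letter m) :: v))) e w' := mc_add_left _ _ e w'
        _ = sh (mc (fun v => c ((none : Letter m) :: v)) e) (mc d e) w'
              + sh (mc c e) (mc (fun v => d ((none : Letter m) :: v)) e) w' := by
            rw [ih w' hw', ih w' hw']
        _ = sh (mc c e) (mc d e) ((none : Letter m) :: w') := by
            simp only [sh]
            rw [hcc, hdd]
    | (some i : Letter m) :: w' =>
      have hw' : w'.length < n := by simp at hw; omega
      have hsplit : (fun u => sh c d ((some i : Letter m) :: u)) =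
          fun u => sh (fun v => c ((some i : Letter m) :: v)) d u
            + sh c (fun v => d ((some i : Letter m) :: v)) u := by
        funext u; simp [sh]
      have hcc : (fun u => mc c e ((some i : Letter m) :: u))
          = sh (e i) (mc (fun v => c ((some i : Letter m) :: v)) e) :=
        funext fun u => mc_cons_some c e i u
      have hdd : (fun u => mc d e ((some i : Letter m) :: u))
          = sh (e i) (mc (fun v => d ((some i : Letter m) :: v)) e) :=
        funext fun u => mc_cons_some d e i u
      calc mc (sh c d) e ((some i : Letter m) :: w')
          = sh (e i) (mc (fun u => sh c d ((some i : Letter m) :: u)) e) w' :=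
            mc_cons_some _ e i w'
        _ = sh (e i) (fun u => mc (sh (fun v => c ((some i : Letter m) :: v)) d) e u
              + mc (sh c (fun v => d ((some i : Letter m) :: v))) e u) w' := by
            rw [hsplit]
            exact sh_congr w' _ _ _ _ (fun v _ => rfl)
              (fun u _ => mc_add_left _ _ e u)
        _ = sh (e i) (mc (sh (fun v => c ((some i : Letter m) :: v)) d) e) w'
              + sh (e i) (mc (sh c (fun v => d ((some i : Letter m) :: v))) e) w' :=
            sh_add_right w' _ _ _
        _ = sh (e i) (sh (mc (fun v => c ((some i : Letter m) :: v)) e) (mc d e)) w'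
              + sh (e i) (sh (mc c e) (mc (fun v => d ((some i : Letter m) :: v)) e)) w' := by
            rw [sh_congr w' _ _ _ _ (fun v _ => rfl)
                (fun u hu => ih u (lt_of_le_of_lt hu hw') _ _),
              sh_congr w' (e i) (e i)
                (mc (sh c (fun v => d ((some i : Letter m) :: v))) e)
                (sh (mc c e) (mc (fun v => d ((some i : Letter m) :: v)) e))
                (fun v _ => rfl)
                (fun u hu => ih u (lt_of_le_of_lt hu hw') _ _)]
        _ = sh (sh (e i) (mc (fun v => c ((some i : Letter m) :: v)) e)) (mc d e) w'
              + sh (mc c e) (sh (e i) (mc (fun v => d ((some i : Letter m) :: v)) e)) w' := by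
            rw [sh_assoc w' (e i) (mc (fun v => c ((some i : Letter m) :: v)) e) (mc d e),
              sh_left_comm w' (e i) (mc c e) (mc (fun v => d ((some i : Letter m) :: v)) e)]
        _ = sh (mc c e) (mc d e) ((some i : Letter m) :: w') := by
            simp only [sh]
            rw [hcc, hdd]

end Main

open CFS in
/-- The multiplicative mixed composition product distributes over the
shuffle product on the right: `(c ⧢ d) ⟲ e = (c ⟲ e) ⧢ (d ⟲ e)`. -/
theorem mixedComp_shuffle_distrib (m p : ℕ) (c d : FPST m p) (e : FPST m m) :
    mcT (shT c d) e = shT (mcT c e) (mcT d e) := by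
  funext i w
  exact mc_sh_key e (w.length + 1) w (Nat.lt_succ_self _) (c i) (d i)
end

section
/- Let X = {x_0,...,x_m}, let c ∈ ℝ^p⟨⟨X⟩⟩ and d, e ∈ ℝ^m⟨⟨X⟩⟩, and set c' := c − c(𝟙)𝟙 (the series c with its constant terms removed). Then val((c ⟲ d) − (c ⟲ e)) ≥ val(c') + val(d − e), with the conventions ∞ + n = ∞. Equivalently, in the ultrametric κ(a,b) = σ^{val(a−b)} for fixed σ ∈ (0,1), one has κ(c ⟲ d, c ⟲ e) ≤ σ^{val(c')} κ(d, e), i.e., c ⟲ (·) is a strong contraction in its right argument. -/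
open scoped BigOperators

namespace CFS

section Aux

variable {m : ℕ}

lemma sh_vanish : ∀ (w : Word m) (a b : FPS m) (n1 n2 : ℕ),
    (∀ v : Word m, v.length < n1 → a v = 0) → (∀ v : Word m, v.length < n2 → b v = 0) →
    w.length < n1 + n2 → sh a b w = 0 := by
  intro w
  induction w with
  | nil =>
    intro a b n1 n2 ha hb hw
    simp only [List.length_nil] at hw
    show a [] * b [] = 0
    rcases Nat.lt_or_ge 0 n1 with h | h
    · rw [ha [] (by simpa using h), zero_mul]
    · rw [hb [] (by simp; omega), mul_zero]
  | cons x u ih =>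
    intro a b n1 n2 ha hb hw
    show sh (fun v => a (x :: v)) b u + sh a (fun v => b (x :: v)) u = 0
    simp only [List.length_cons] at hw
    rw [ih _ _ (n1 - 1) n2 (fun v hv => ha (x :: v) (by simp; omega))
        hb (by omega),
      ih _ _ n1 (n2 - 1) ha (fun v hv => hb (x :: v) (by simp; omega)) (by omega),
      add_zero]

lemma sh_sub : ∀ (w : Word m) (a a' b b' : FPS m),
    sh a b w - sh a' b' w =
      sh (fun v => a v - a' v) b w + sh a' (fun v => b v - b' v) w := by
  intro w
  induction w with
  | nil =>
    intro a a' b b'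
    show a [] * b [] - a' [] * b' [] = (a [] - a' []) * b [] + a' [] * (b [] - b' [])
    ring
  | cons x u ih =>
    intro a a' b b'
    show (sh (fun v => a (x :: v)) b u + sh a (fun v => b (x :: v)) u)
        - (sh (fun v => a' (x :: v)) b' u + sh a' (fun v => b' (x :: v)) u)
      = (sh (fun v => a (x :: v) - a' (x :: v)) b u
          + sh (fun v => a v - a' v) (fun v => b (x :: v)) u)
        + (sh (fun v => a' (x :: v)) (fun v => b v - b' v) u
          + sh a' (fun v => b (x :: v) - b' (x :: v)) u)
    have h1 := ih (fun v => a (x :: v)) (fun v => a' (x :: v)) b b'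
    have h2 := ih a a' (fun v => b (x :: v)) (fun v => b' (x :: v))
    linarith [h1, h2]

lemma wmc_vanish (d : FPST m m) : ∀ (η w : Word m), w.length < η.length → wmc d η w = 0 := by
  intro η
  induction η with
  | nil => intro w hw; simp at hw
  | cons x η' ih =>
    intro w hw
    simp only [List.length_cons] at hw
    cases x with
    | none =>
      show lc none (wmc d η') w = 0
      match w with
      | [] => rfl
      | y :: u =>
        show (if y = none then wmc d η' u else 0) = 0
        split
        · exact ih u (by simp at hw; omega)
        · rfl
    | some i =>
      show lc (some i) (sh (d i) (wmc d η')) w = 0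
      match w with
      | [] => rfl
      | y :: u =>
        show (if y = some i then sh (d i) (wmc d η') u else 0) = 0
        split
        · exact sh_vanish u _ _ 0 η'.length (by simp) (fun v hv => ih v hv)
            (by simp at hw; omega)
        · rfl

lemma wmc_agree (d e : FPST m m) (n : ℕ)
    (hde : ∀ (i : Fin m) (v : Word m), v.length < n → d i v = e i v) :
    ∀ (η : Word m), η ≠ [] → ∀ (w : Word m), w.length < η.length + n →
      wmc d η w = wmc e η w := by
  intro η
  induction η with
  | nil => intro h; exact absurd rfl h
  | cons x η' ih =>
    intro _ w hw
    simp only [List.length_cons] at hw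
    cases x with
    | none =>
      show lc none (wmc d η') w = lc none (wmc e η') w
      match w with
      | [] => rfl
      | y :: u =>
        show (if y = none then wmc d η' u else 0) = (if y = none then wmc e η' u else 0)
        split
        · rcases eq_or_ne η' [] with h | h
          · subst h; rfl
          · exact ih h u (by simp at hw; omega)
        · rfl
    | some i =>
      show lc (some i) (sh (d i) (wmc d η')) w = lc (some i) (sh (e i) (wmc e η')) w
      match w with
      | [] => rfl
      | y :: u =>
        show (if y = some i then sh (d i) (wmc d η') u else 0)
            = (if y = some i then sh (e i) (wmc e η') u else 0)
        split
        · have hu : u.length < η'.length + n := by simp at hw; omega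
          have hsub : sh (d i) (wmc d η') u - sh (e i) (wmc e η') u = 0 := by
            rw [sh_sub u (d i) (e i) (wmc d η') (wmc e η')]
            have h1 : sh (fun v => d i v - e i v) (wmc d η') u = 0 :=
              sh_vanish u _ _ n η'.length
                (fun v hv => by rw [hde i v hv, sub_self])
                (fun v hv => wmc_vanish d η' v hv) (by omega)
            have h2 : sh (e i) (fun v => wmc d η' v - wmc e η' v) u = 0 := by
              rcases eq_or_ne η' [] with h | h
              · subst h
                exact sh_vanish u _ _ 0 (u.length + 1) (by simp)
                  (fun v hv => by show wmc d [] v - wmc e [] v = 0; simp [wmc])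
                  (by omega)
              · exact sh_vanish u _ _ 0 (η'.length + n) (by simp)
                  (fun v hv => by rw [ih h v hv, sub_self]) (by omega)
            rw [h1, h2, add_zero]
          linarith [hsub]
        · rfl

lemma le_val (c : FPS m) (N : ℕ∞) (h : ∀ w : Word m, c w ≠ 0 → N ≤ w.length) :
    N ≤ val c := by
  apply le_sInf
  rintro b ⟨w, hw, rfl⟩
  exact h w hw

lemma val_le (c : FPS m) (w : Word m) (h : c w ≠ 0) : val c ≤ w.length :=
  sInf_le ⟨w, h, rfl⟩

lemma enpow_add (σ : ℝ) (a b : ℕ∞) : enpow σ (a + b) = enpow σ a * enpow σ b := by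
  rcases eq_or_ne a ⊤ with ha | ha
  · simp [enpow, ha]
  rcases eq_or_ne b ⊤ with hb | hb
  · simp [enpow, hb, WithTop.add_top]
  · have hab : a + b ≠ ⊤ := WithTop.add_ne_top.mpr ⟨ha, hb⟩
    rw [enpow, enpow, enpow, if_neg ha, if_neg hb, if_neg hab,
      ENat.toNat_add ha hb, pow_add]

lemma enpow_anti {σ : ℝ} (hσ0 : 0 ≤ σ) (hσ1 : σ ≤ 1) {a b : ℕ∞} (h : a ≤ b) :
    enpow σ b ≤ enpow σ a := by
  rcases eq_or_ne b ⊤ with hb | hb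
  · rw [enpow, if_pos hb, enpow]
    split
    · exact le_refl 0
    · exact pow_nonneg hσ0 _
  · have ha : a ≠ ⊤ := fun h' => hb (top_le_iff.mp (h' ▸ h))
    rw [enpow, enpow, if_neg ha, if_neg hb]
    exact pow_le_pow_of_le_one hσ0 hσ1 (ENat.toNat_le_toNat h hb)

end Aux

end CFS

open CFS in
/-- With `c' := c − c(𝟙)𝟙`, one has
`val((c ⟲ d) − (c ⟲ e)) ≥ val(c') + val(d − e)` in `ℕ∞`; equivalently, for the
ultrametric `κ(a,b) = σ^{val(a−b)}` with `σ ∈ (0,1)`,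
`κ(c ⟲ d, c ⟲ e) ≤ σ^{val(c')} κ(d,e)`. -/
theorem mixedComp_strong_contraction (m p : ℕ) (c : FPST m p) (d e : FPST m m)
    (σ : ℝ) (hσ0 : 0 < σ) (hσ1 : σ < 1) :
    valT (mcT c d - mcT c e) ≥
      valT (fun i w => if w = [] then 0 else c i w : FPST m p) + valT (d - e) ∧
    enpow σ (valT (mcT c d - mcT c e)) ≤
      enpow σ (valT (fun i w => if w = [] then 0 else c i w : FPST m p)) *
        enpow σ (valT (d - e)) := by
  set R := valT (fun i w => if w = [] then 0 else c i w : FPST m p) with hR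
  set N := valT (d - e) with hN
  have main : valT (mcT c d - mcT c e) ≥ R + N := by
    apply le_iInf
    intro i
    apply le_val
    intro w hw
    have hw' : mc (c i) d w - mc (c i) e w ≠ 0 := hw
    have key : mc (c i) d w - mc (c i) e w =
        ∑ k ∈ Finset.range (w.length + 1), ∑ η : Fin k → Letter m,
          c i (List.ofFn η) * (wmc d (List.ofFn η) w - wmc e (List.ofFn η) w) := by
      rw [mc, mc, ← Finset.sum_sub_distrib]
      refine Finset.sum_congr rfl fun k _ => ?_
      rw [← Finset.sum_sub_distrib]
      exact Finset.sum_congr rfl fun η _ => (mul_sub _ _ _).symm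
    rw [key] at hw'
    obtain ⟨k, -, hk⟩ := Finset.exists_ne_zero_of_sum_ne_zero hw'
    obtain ⟨η, -, hη⟩ := Finset.exists_ne_zero_of_sum_ne_zero hk
    have hc : c i (List.ofFn η) ≠ 0 := left_ne_zero_of_mul hη
    have hwmc : wmc d (List.ofFn η) w - wmc e (List.ofFn η) w ≠ 0 :=
      right_ne_zero_of_mul hη
    have hne : List.ofFn η ≠ [] := by
      intro h
      rw [h] at hwmc
      exact hwmc (sub_self _)
    -- N is finite
    have hNtop : N ≠ ⊤ := by
      intro htop
      have hdeq : d = e := by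
        funext j v
        by_contra hdv
        have : (d - e) j v ≠ 0 := sub_ne_zero_of_ne hdv
        have h1 : N ≤ (v.length : ℕ∞) := le_trans (iInf_le _ j) (val_le _ v this)
        rw [htop] at h1
        exact (by simp : ((v.length : ℕ∞) ≠ ⊤)) (top_le_iff.mp h1)
      rw [hdeq] at hwmc
      exact hwmc (sub_self _)
    obtain ⟨n, hNn⟩ : ∃ n : ℕ, N = (n : ℕ∞) := ⟨N.toNat, (ENat.coe_toNat hNtop).symm⟩
    rw [hNn]
    have hde : ∀ (j : Fin m) (v : Word m), v.length < n → d j v = e j v := by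
      intro j v hv
      by_contra hdv
      have : (d - e) j v ≠ 0 := sub_ne_zero_of_ne hdv
      have h1 : (n : ℕ∞) ≤ (v.length : ℕ∞) := by
        rw [← hNn]; exact le_trans (iInf_le _ j) (val_le _ v this)
      exact absurd (Nat.cast_le.mp h1) (by omega)
    have hlen : (List.ofFn η).length + n ≤ w.length := by
      by_contra hlt
      exact hwmc (sub_eq_zero_of_eq (wmc_agree d e n hde _ hne w (by omega)))
    have hRk : R ≤ ((List.ofFn η).length : ℕ∞) := by
      refine le_trans (iInf_le _ i) (val_le _ (List.ofFn η) ?_)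
      show (if List.ofFn η = [] then (0:ℝ) else c i (List.ofFn η)) ≠ 0
      rw [if_neg hne]
      exact hc
    calc R + (n : ℕ∞) ≤ ((List.ofFn η).length : ℕ∞) + (n : ℕ∞) :=
          add_le_add hRk le_rfl
      _ = (((List.ofFn η).length + n : ℕ) : ℕ∞) := by rw [Nat.cast_add]
      _ ≤ (w.length : ℕ∞) := Nat.cast_le.mpr hlen
  refine ⟨main, ?_⟩
  calc enpow σ (valT (mcT c d - mcT c e)) ≤ enpow σ (R + N) :=
        enpow_anti hσ0.le hσ1.le main
    _ = enpow σ R * enpow σ N := enpow_add σ R N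
end

section
/- Let X = {x_0,...,x_m} and X' = {x'_0,...,x'_p}, let c ∈ ℝ^q⟨⟨X'⟩⟩, d ∈ ℝ^p⟨⟨X⟩⟩ and e ∈ ℝ^m⟨⟨X⟩⟩. Then the composition product and the multiplicative mixed composition product are associative in combination: c ∘ (d ⟲ e) = (c ∘ d) ⟲ e. -/
open scoped BigOperators

namespace CFS
noncomputable section
variable {m ℓ : ℕ}

def ls (x : Letter m) (c : FPS m) : FPS m := fun u => c (x :: u)

lemma sh_nil (f g : FPS m) : sh f g [] = f [] * g [] := rfl
lemma sh_cons (f g : FPS m) (x : Letter m) (w : Word m) :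
    sh f g (x :: w) = sh (ls x f) g w + sh f (ls x g) w := rfl

lemma sh_congr : ∀ (w : Word m) (f f' g g' : FPS m),
    (∀ u : Word m, u.length ≤ w.length → f u = f' u) →
    (∀ u : Word m, u.length ≤ w.length → g u = g' u) →
    sh f g w = sh f' g' w
  | [], f, f', g, g', hf, hg => by
      simp [sh_nil, hf [] (by simp), hg [] (by simp)]
  | x :: w, f, f', g, g', hf, hg => by
      rw [sh_cons, sh_cons,
        sh_congr w (ls x f) (ls x f') g g'
          (fun u hu => hf (x :: u) (by simpa using Nat.succ_le_succ hu))
          (fun u hu => hg u (Nat.le_succ_of_le hu)),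
        sh_congr w f f' (ls x g) (ls x g')
          (fun u hu => hf u (Nat.le_succ_of_le hu))
          (fun u hu => hg (x :: u) (by simpa using Nat.succ_le_succ hu))]

lemma sh_add_left : ∀ (w : Word m) (a b g : FPS m),
    sh (fun u => a u + b u) g w = sh a g w + sh b g w
  | [], a, b, g => by simp [sh_nil]; ring
  | x :: w, a, b, g => by
      rw [sh_cons, sh_cons, sh_cons]
      show sh (fun u => a (x::u) + b (x::u)) g w + sh (fun u => a u + b u) (ls x g) w = _
      rw [sh_add_left w _ _ g, sh_add_left w a b (ls x g)]
      show sh (ls x a) g w + sh (ls x b) g w + (sh a (ls x g) w + sh b (ls x g) w) = _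
      ring

lemma sh_comm : ∀ (w : Word m) (f g : FPS m), sh f g w = sh g f w
  | [], f, g => by simp [sh_nil]; ring
  | x :: w, f, g => by
      rw [sh_cons, sh_cons, sh_comm w (ls x f) g, sh_comm w f (ls x g)]; ring

lemma sh_add_right (w : Word m) (f a b : FPS m) :
    sh f (fun u => a u + b u) w = sh f a w + sh f b w := by
  rw [sh_comm, sh_add_left, sh_comm w a f, sh_comm w b f]

lemma sh_smul_right : ∀ (w : Word m) (r : ℝ) (f g : FPS m),
    sh f (fun u => r * g u) w = r * sh f g w
  | [], r, f, g => by simp [sh_nil]; ring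
  | x :: w, r, f, g => by
      rw [sh_cons, sh_cons]
      show sh (ls x f) (fun u => r * g u) w + sh f (fun u => r * g (x::u)) w = _
      rw [sh_smul_right w r (ls x f) g,
        show (fun u => r * g (x::u)) = (fun u => r * ls x g u) from rfl,
        sh_smul_right w r f (ls x g)]
      ring

lemma sh_zero_right : ∀ (w : Word m) (f : FPS m), sh f (fun _ => 0) w = 0
  | [], f => by simp [sh_nil]
  | x :: w, f => by
      rw [sh_cons]
      show sh (ls x f) (fun _ => 0) w + sh f (fun _ => (0:ℝ)) w = 0
      rw [sh_zero_right w (ls x f), sh_zero_right w f]; ring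

lemma sh_zero_left (w : Word m) (f : FPS m) : sh (fun _ => 0) f w = 0 := by
  rw [sh_comm, sh_zero_right]

lemma sh_unit_left : ∀ (w : Word m) (g : FPS m), sh (unit m) g w = g w
  | [], g => by simp [sh_nil, unit]
  | x :: w, g => by
      rw [sh_cons]
      have h1 : ls x (unit m) = fun _ => (0:ℝ) := by
        funext u; simp [ls, unit]
      rw [h1, sh_zero_left, sh_unit_left w (ls x g)]
      simp [ls]

lemma sh_sum_right {α : Type*} (S : Finset α) (w : Word m) (f : FPS m) (F : α → FPS m) :
    sh f (fun u => ∑ s ∈ S, F s u) w = ∑ s ∈ S, sh f (F s) w := by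
  classical
  induction S using Finset.induction with
  | empty => simpa using sh_zero_right w f
  | insert _ _ hs ih =>
      rename_i a S'
      rw [Finset.sum_insert hs]
      have : (fun u => ∑ s ∈ insert a S', F s u) = fun u => F a u + ∑ s ∈ S', F s u := by
        funext u; rw [Finset.sum_insert hs]
      rw [this, sh_add_right, ih]

lemma sh_assoc : ∀ (w : Word m) (f g h : FPS m),
    sh (sh f g) h w = sh f (sh g h) w
  | [], f, g, h => by simp [sh_nil]; ring
  | x :: w, f, g, h => by
      have hls : ls x (sh f g) = fun u => sh (ls x f) g u + sh f (ls x g) u := by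
        funext u; exact sh_cons f g x u
      have hls2 : ls x (sh g h) = fun u => sh (ls x g) h u + sh g (ls x h) u := by
        funext u; exact sh_cons g h x u
      rw [sh_cons, sh_cons, hls, hls2, sh_add_left, sh_add_right,
        sh_assoc w (ls x f) g h, sh_assoc w f (ls x g) h, sh_assoc w f g (ls x h)]
      ring


lemma sh_support_right : ∀ (w : Word m) (n : ℕ) (f g : FPS m),
    (∀ u : Word m, u.length < n → g u = 0) → w.length < n → sh f g w = 0
  | [], n, f, g, hg, hw => by rw [sh_nil, hg [] hw, mul_zero]
  | x :: w, n, f, g, hg, hw => by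
      rw [sh_cons, sh_support_right w n (ls x f) g hg
          (lt_of_le_of_lt (Nat.le_succ _) hw),
        sh_support_right w (n-1) f (ls x g)
          (fun u hu => hg (x :: u) (by simp only [List.length_cons]; omega))
          (by simp only [List.length_cons] at hw ⊢; omega), add_zero]

lemma wmc_support (d : FPST m m) : ∀ (η : Word m) (w : Word m),
    w.length < η.length → wmc d η w = 0
  | [], w, h => by simp at h
  | none :: η, [], h => by simp [wmc, lc]
  | none :: η, y :: u, h => by
      simp only [wmc, lc]
      rcases eq_or_ne y (none : Letter m) with hy | hy
      · simp only [hy, if_pos rfl]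
        exact wmc_support d η u (by simpa using Nat.lt_of_succ_lt_succ h)
      · simp [hy]
  | some i :: η, [], h => by simp [wmc, lc]
  | some i :: η, y :: u, h => by
      simp only [wmc, lc]
      rcases eq_or_ne y (some i : Letter m) with hy | hy
      · simp only [hy, if_pos rfl]
        exact sh_support_right u η.length (d i) (wmc d η) (wmc_support d η)
          (by simpa using Nat.lt_of_succ_lt_succ h)
      · simp [hy]

lemma wcomp_support (d : FPST m ℓ) : ∀ (η : Word ℓ) (w : Word m),
    w.length < η.length → wcomp d η w = 0
  | [], w, h => by simp at h
  | none :: η, [], h => by simp [wcomp, lc]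
  | none :: η, y :: u, h => by
      simp only [wcomp, lc]
      rcases eq_or_ne y (none : Letter m) with hy | hy
      · simp only [hy, if_pos rfl]
        exact sh_support_right u η.length (unit m) (wcomp d η) (wcomp_support d η)
          (by simpa using Nat.lt_of_succ_lt_succ h)
      · simp [hy]
  | some i :: η, [], h => by simp [wcomp, lc]
  | some i :: η, y :: u, h => by
      simp only [wcomp, lc]
      rcases eq_or_ne y (none : Letter m) with hy | hy
      · simp only [hy, if_pos rfl]
        exact sh_support_right u η.length (d i) (wcomp d η) (wcomp_support d η)
          (by simpa using Nat.lt_of_succ_lt_succ h)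
      · simp [hy]

lemma mc_nil (c : FPS m) (d : FPST m m) : mc c d [] = c [] := by
  simp [mc, wmc, unit, List.ofFn]

lemma comp_nil (c : FPS ℓ) (d : FPST m ℓ) : comp c d [] = c [] := by
  simp [comp, wcomp, unit, List.ofFn]

lemma mc_eq_sum_range (c : FPS m) (d : FPST m m) (w : Word m) (N : ℕ)
    (h : w.length + 1 ≤ N) :
    mc c d w = ∑ k ∈ Finset.range N,
      ∑ η : Fin k → Letter m, c (List.ofFn η) * wmc d (List.ofFn η) w := by
  unfold mc
  refine Finset.sum_subset (Finset.range_subset_range.2 h) fun k _ hk => ?_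
  refine Finset.sum_eq_zero fun η _ => ?_
  rw [wmc_support d _ w (by simp only [List.length_ofFn]; simp only [Finset.mem_range] at hk; omega),
    mul_zero]

lemma comp_eq_sum_range (c : FPS ℓ) (d : FPST m ℓ) (w : Word m) (N : ℕ)
    (h : w.length + 1 ≤ N) :
    comp c d w = ∑ k ∈ Finset.range N,
      ∑ η : Fin k → Letter ℓ, c (List.ofFn η) * wcomp d (List.ofFn η) w := by
  unfold comp
  refine Finset.sum_subset (Finset.range_subset_range.2 h) fun k _ hk => ?_
  refine Finset.sum_eq_zero fun η _ => ?_
  rw [wcomp_support d _ w (by simp only [List.length_ofFn]; simp only [Finset.mem_range] at hk; omega),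
    mul_zero]

lemma sum_fn_succ {L : Type*} [Fintype L] (j : ℕ) (G : List L → ℝ) :
    ∑ η : Fin (j+1) → L, G (List.ofFn η) =
      ∑ x : L, ∑ η : Fin j → L, G (x :: List.ofFn η) := by
  rw [← Equiv.sum_comp (Fin.consEquiv fun _ : Fin (j+1) => L)
    (fun η => G (List.ofFn η)), Fintype.sum_prod_type]
  refine Finset.sum_congr rfl fun x _ => Finset.sum_congr rfl fun η _ => ?_
  congr 1
  simp [Fin.consEquiv, List.ofFn_succ]

lemma mc_cons_none (c : FPS m) (d : FPST m m) (w : Word m) :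
    mc c d (none :: w) = mc (ls none c) d w := by
  unfold mc
  rw [show (none :: w).length + 1 = (w.length + 1) + 1 from rfl, Finset.sum_range_succ']
  have h0 : ∑ η : Fin 0 → Letter m, c (List.ofFn η) * wmc d (List.ofFn η) (none :: w) = 0 := by
    refine Finset.sum_eq_zero fun η _ => ?_
    simp [List.ofFn_zero, wmc, unit]
  rw [h0, add_zero]
  refine Finset.sum_congr rfl fun k _ => ?_
  rw [sum_fn_succ k (fun u => c u * wmc d u (none :: w)), Fintype.sum_option]
  have hsome : ∀ i : Fin m,
      ∑ η : Fin k → Letter m,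
        c (some i :: List.ofFn η) * wmc d (some i :: List.ofFn η) (none :: w) = 0 := by
    intro i
    refine Finset.sum_eq_zero fun η _ => ?_
    simp [wmc, lc]
  rw [Finset.sum_congr rfl fun i _ => hsome i, Finset.sum_const, smul_zero, add_zero]
  refine Finset.sum_congr rfl fun η _ => ?_
  simp [wmc, lc, ls]

lemma mc_cons_some (c : FPS m) (d : FPST m m) (i : Fin m) (w : Word m) :
    mc c d (some i :: w) = sh (d i) (mc (ls (some i) c) d) w := by
  have lhs : mc c d (some i :: w) = ∑ k ∈ Finset.range (w.length + 1),
      ∑ η : Fin k → Letter m,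
        ls (some i) c (List.ofFn η) * sh (d i) (wmc d (List.ofFn η)) w := by
    unfold mc
    rw [show (some i :: w).length + 1 = (w.length + 1) + 1 from rfl, Finset.sum_range_succ']
    have h0 : ∑ η : Fin 0 → Letter m,
        c (List.ofFn η) * wmc d (List.ofFn η) (some i :: w) = 0 := by
      refine Finset.sum_eq_zero fun η _ => ?_
      simp [List.ofFn_zero, wmc, unit]
    rw [h0, add_zero]
    refine Finset.sum_congr rfl fun k _ => ?_
    rw [sum_fn_succ k (fun u => c u * wmc d u (some i :: w)), Fintype.sum_option]
    have hnone : ∑ η : Fin k → Letter m,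
        c (none :: List.ofFn η) * wmc d (none :: List.ofFn η) (some i :: w) = 0 := by
      refine Finset.sum_eq_zero fun η _ => ?_
      simp [wmc, lc]
    rw [hnone, zero_add]
    rw [Finset.sum_eq_single i]
    · refine Finset.sum_congr rfl fun η _ => ?_
      simp [wmc, lc, ls]
    · intro j _ hj
      refine Finset.sum_eq_zero fun η _ => ?_
      have : (some i : Letter m) ≠ some j := by simpa [eq_comm] using hj
      simp [wmc, lc, this]
    · intro h; exact absurd (Finset.mem_univ i) h
  rw [lhs]
  have rhs : sh (d i) (mc (ls (some i) c) d) w =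
      sh (d i) (fun u => ∑ k ∈ Finset.range (w.length + 1),
        ∑ η : Fin k → Letter m,
          ls (some i) c (List.ofFn η) * wmc d (List.ofFn η) u) w := by
    refine sh_congr w _ _ _ _ (fun u _ => rfl) fun u hu => ?_
    exact mc_eq_sum_range _ d u (w.length + 1) (by omega)
  rw [rhs, sh_sum_right]
  refine (Finset.sum_congr rfl fun k _ => ?_).symm
  rw [sh_sum_right]
  refine (Finset.sum_congr rfl fun η _ => ?_).symm
  rw [← sh_smul_right w _ (d i) (wmc d (List.ofFn η))]

def Dlt {m ℓ : ℕ} (d : FPST m ℓ) : Letter ℓ → FPS m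
  | none => unit m
  | some i => d i

lemma wcomp_cons (d : FPST m ℓ) (x : Letter ℓ) (η : Word ℓ) :
    wcomp d (x :: η) = lc none (sh (Dlt d x) (wcomp d η)) := by
  cases x <;> rfl

lemma comp_cons_some (c : FPS ℓ) (d : FPST m ℓ) (i : Fin m) (w : Word m) :
    comp c d (some i :: w) = 0 := by
  have hw : ∀ η : Word ℓ, wcomp d η (some i :: w) = 0 := by
    intro η
    cases η with
    | nil => simp [wcomp, unit]
    | cons x η => rw [wcomp_cons]; simp [lc]
  unfold comp
  refine Finset.sum_eq_zero fun k _ => Finset.sum_eq_zero fun η _ => ?_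
  rw [hw, mul_zero]

lemma comp_cons_none (c : FPS ℓ) (d : FPST m ℓ) (w : Word m) :
    comp c d (none :: w) =
      ∑ x : Letter ℓ, sh (Dlt d x) (comp (ls x c) d) w := by
  have lhs : comp c d (none :: w) = ∑ x : Letter ℓ, ∑ k ∈ Finset.range (w.length + 1),
      ∑ η : Fin k → Letter ℓ,
        ls x c (List.ofFn η) * sh (Dlt d x) (wcomp d (List.ofFn η)) w := by
    unfold comp
    rw [show (none :: w).length + 1 = (w.length + 1) + 1 from rfl, Finset.sum_range_succ']
    have h0 : ∑ η : Fin 0 → Letter ℓ,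
        c (List.ofFn η) * wcomp d (List.ofFn η) (none :: w) = 0 := by
      refine Finset.sum_eq_zero fun η _ => ?_
      simp [List.ofFn_zero, wcomp, unit]
    rw [h0, add_zero]
    rw [Finset.sum_comm]
    refine Finset.sum_congr rfl fun k _ => ?_
    rw [sum_fn_succ k (fun u => c u * wcomp d u (none :: w))]
    refine Finset.sum_congr rfl fun x _ => Finset.sum_congr rfl fun η _ => ?_
    rw [wcomp_cons]
    simp [lc, ls]
  rw [lhs]
  refine Finset.sum_congr rfl fun x _ => ?_
  have rhs : sh (Dlt d x) (comp (ls x c) d) w =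
      sh (Dlt d x) (fun u => ∑ k ∈ Finset.range (w.length + 1),
        ∑ η : Fin k → Letter ℓ,
          ls x c (List.ofFn η) * wcomp d (List.ofFn η) u) w := by
    refine sh_congr w _ _ _ _ (fun u _ => rfl) fun u hu => ?_
    exact comp_eq_sum_range _ d u (w.length + 1) (by omega)
  rw [rhs, sh_sum_right]
  refine Finset.sum_congr rfl fun k _ => ?_
  rw [sh_sum_right]
  refine Finset.sum_congr rfl fun η _ => ?_
  rw [← sh_smul_right w _ (Dlt d x) (wcomp d (List.ofFn η))]

lemma mc_add (a b : FPS m) (d : FPST m m) (w : Word m) :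
    mc (fun u => a u + b u) d w = mc a d w + mc b d w := by
  simp [mc, add_mul, Finset.sum_add_distrib]

lemma mc_zero (d : FPST m m) (w : Word m) : mc (fun _ => 0) d w = 0 := by
  simp [mc]

lemma mc_unit (e : FPST m m) (w : Word m) : mc (unit m) e w = unit m w := by
  unfold mc
  rw [Finset.sum_eq_single 0]
  · have : ∀ η : Fin 0 → Letter m, unit m (List.ofFn η) * wmc e (List.ofFn η) w
        = unit m w := by
      intro η
      simp [List.ofFn_zero, unit, wmc]
    rw [Finset.sum_congr rfl fun η _ => this η]
    simp
  · intro k _ hk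
    refine Finset.sum_eq_zero fun η _ => ?_
    have : List.ofFn η ≠ [] := by
      intro h
      exact hk (by simpa using congrArg List.length h)
    simp [unit, this]
  · intro h; simp at h

lemma mc_sum {α : Type*} (S : Finset α) (F : α → FPS m) (d : FPST m m) (w : Word m) :
    mc (fun u => ∑ s ∈ S, F s u) d w = ∑ s ∈ S, mc (F s) d w := by
  unfold mc
  simp only [Finset.sum_mul]
  rw [Finset.sum_congr rfl fun k (_ : k ∈ Finset.range (w.length + 1)) =>
    (Finset.sum_comm : ∑ η : Fin k → Letter m, ∑ s ∈ S,
      F s (List.ofFn η) * wmc d (List.ofFn η) w = _), Finset.sum_comm]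

lemma mc_sh_aux (e : FPST m m) : ∀ (n : ℕ) (w : Word m), w.length ≤ n →
    ∀ a b : FPS m, mc (sh a b) e w = sh (mc a e) (mc b e) w := by
  intro n
  induction n with
  | zero =>
    intro w hw a b
    match w, hw with
    | [], _ => rw [mc_nil, sh_nil, sh_nil, mc_nil, mc_nil]
  | succ n ih =>
    intro w hw a b
    match w with
    | [] => rw [mc_nil, sh_nil, sh_nil, mc_nil, mc_nil]
    | (none : Letter m) :: w' =>
      have hw' : w'.length ≤ n := by simpa using hw
      have hsplit : ls none (sh a b) =
          fun u => sh (ls none a) b u + sh a (ls none b) u :=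
        funext fun u => sh_cons a b none u
      rw [mc_cons_none, hsplit, mc_add, ih w' hw', ih w' hw', sh_cons]
      congr 1
      · exact sh_congr w' _ _ _ _ (fun u _ => (mc_cons_none a e u).symm) (fun u _ => rfl)
      · exact sh_congr w' _ _ _ _ (fun u _ => rfl) (fun u _ => (mc_cons_none b e u).symm)
    | (some i : Letter m) :: w' =>
      have hw' : w'.length ≤ n := by simpa using hw
      rw [mc_cons_some]
      have hmc : mc (ls (some i) (sh a b)) e =
          fun u => mc (sh (ls (some i) a) b) e u + mc (sh a (ls (some i) b)) e u := by
        funext u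
        rw [show ls (some i) (sh a b) =
          fun v => sh (ls (some i) a) b v + sh a (ls (some i) b) v from
          funext fun v => sh_cons a b (some i) v, mc_add]
      rw [hmc, sh_add_right]
      have h1 : sh (e i) (mc (sh (ls (some i) a) b) e) w' =
          sh (e i) (sh (mc (ls (some i) a) e) (mc b e)) w' :=
        sh_congr w' _ _ _ _ (fun u _ => rfl) fun u hu => ih u (le_trans hu hw') _ _
      have h2 : sh (e i) (mc (sh a (ls (some i) b)) e) w' =
          sh (e i) (sh (mc a e) (mc (ls (some i) b) e)) w' :=
        sh_congr w' _ _ _ _ (fun u _ => rfl) fun u hu => ih u (le_trans hu hw') _ _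
      rw [h1, h2, sh_cons]
      congr 1
      · rw [← sh_assoc]
        exact sh_congr w' _ _ _ _ (fun u _ => (mc_cons_some a e i u).symm) fun u _ => rfl
      · rw [← sh_assoc,
          show sh (e i) (mc a e) = sh (mc a e) (e i) from funext fun u => sh_comm u _ _,
          sh_assoc]
        exact sh_congr w' _ _ _ _ (fun u _ => rfl) fun u _ => (mc_cons_some b e i u).symm

lemma mc_sh (e : FPST m m) (a b : FPS m) (w : Word m) :
    mc (sh a b) e w = sh (mc a e) (mc b e) w :=
  mc_sh_aux e w.length w le_rfl a b

lemma comp_mc_aux {p : ℕ} (d : FPST m p) (e : FPST m m) :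
    ∀ (n : ℕ) (w : Word m), w.length ≤ n →
    ∀ c : FPS p, comp c (mcT d e) w = mc (comp c d) e w := by
  intro n
  induction n with
  | zero =>
    intro w hw c
    match w, hw with
    | [], _ => rw [comp_nil, mc_nil, comp_nil]
  | succ n ih =>
    intro w hw c
    match w with
    | [] => rw [comp_nil, mc_nil, comp_nil]
    | (some i : Letter m) :: w' =>
      rw [comp_cons_some, mc_cons_some,
        show ls (some i) (comp c d) = fun _ => (0:ℝ) from
          funext fun u => comp_cons_some c d i u,
        show mc (fun _ => (0:ℝ)) e = fun _ => (0:ℝ) from funext fun u => mc_zero e u,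
        sh_zero_right]
    | (none : Letter m) :: w' =>
      have hw' : w'.length ≤ n := by simpa using hw
      rw [comp_cons_none, mc_cons_none,
        show ls none (comp c d) =
          fun u => ∑ x : Letter p, sh (Dlt d x) (comp (ls x c) d) u from
          funext fun u => comp_cons_none c d u,
        mc_sum]
      refine Finset.sum_congr rfl fun x _ => ?_
      rw [mc_sh]
      refine sh_congr w' _ _ _ _ (fun u _ => ?_) (fun u hu => ih u (le_trans hu hw') _)
      cases x with
      | none => exact (mc_unit e u).symm
      | some j => rfl


end
end CFS

open CFS in
/-- For `c ∈ ℝ^q⟨⟨X'⟩⟩` (with `|X'| = p+1`), `d ∈ ℝ^p⟨⟨X⟩⟩` and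
`e ∈ ℝ^m⟨⟨X⟩⟩`: `c ∘ (d ⟲ e) = (c ∘ d) ⟲ e`. -/
theorem comp_mixedComp_mixed_assoc (m p q : ℕ) (c : FPST p q) (d : FPST m p)
    (e : FPST m m) :
    compT c (mcT d e) = mcT (compT c d) e := by
  funext i w
  exact comp_mc_aux d e w.length w le_rfl (c i)
end

section
/- Let X = {x_0,...,x_m}, let c ∈ ℝ^q⟨⟨X⟩⟩ and d, e ∈ ℝ^m⟨⟨X⟩⟩. Then (c ⟲ d) ⟲ e = c ⟲ (d ⋆ e), i.e., ⟲ is a right action of the monoid (ℝ^m⟨⟨X⟩⟩, ⋆, 1l) on ℝ^q⟨⟨X⟩⟩. -/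
open scoped BigOperators

namespace CFSAux

open CFS

variable {m : ℕ}

/-! ### Basic lemmas about the shuffle product -/

lemma sh_nil (c d : FPS m) : sh c d [] = c [] * d [] := rfl

lemma sh_cons (x : Letter m) (c d : FPS m) (w : Word m) :
    sh c d (x :: w) = sh (fun u => c (x :: u)) d w + sh c (fun u => d (x :: u)) w := rfl

lemma sh_zero_right (c : FPS m) : ∀ w : Word m, sh c (fun _ => 0) w = 0
  | [] => by simp [sh_nil]
  | x :: w => by
      rw [sh_cons]
      simp [sh_zero_right _ w]

lemma sh_add_right (c d d' : FPS m) :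
    ∀ w : Word m, sh c (fun u => d u + d' u) w = sh c d w + sh c d' w
  | [] => by simp [sh_nil]; ring
  | x :: w => by
      rw [sh_cons, sh_cons (d := d), sh_cons (d := d')]
      rw [sh_add_right _ d d' w, sh_add_right _ (fun u => d (x :: u)) (fun u => d' (x :: u)) w]
      ring

lemma sh_add_left (c c' d : FPS m) :
    ∀ w : Word m, sh (fun u => c u + c' u) d w = sh c d w + sh c' d w
  | [] => by simp [sh_nil]; ring
  | x :: w => by
      rw [sh_cons, sh_cons (c := c), sh_cons (c := c')]
      rw [sh_add_left (fun u => c (x :: u)) (fun u => c' (x :: u)) d w, sh_add_left c c' _ w]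
      ring

lemma sh_mul_right (r : ℝ) (c d : FPS m) :
    ∀ w : Word m, sh c (fun u => r * d u) w = r * sh c d w
  | [] => by simp [sh_nil]; ring
  | x :: w => by
      rw [sh_cons, sh_cons (d := d)]
      rw [sh_mul_right r _ d w, sh_mul_right r c (fun u => d (x :: u)) w]
      ring

lemma sh_sum_right {ι : Type*} (s : Finset ι) (c : FPS m) (f : ι → FPS m) (w : Word m) :
    sh c (fun u => ∑ j ∈ s, f j u) w = ∑ j ∈ s, sh c (f j) w := by
  classical
  induction s using Finset.induction_on with
  | empty => simpa using sh_zero_right c w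
  | insert _ _ hj ih =>
      rename_i a s
      rw [Finset.sum_insert hj]
      have : (fun u => ∑ j ∈ insert a s, f j u) = fun u => f a u + ∑ j ∈ s, f j u := by
        funext u; rw [Finset.sum_insert hj]
      rw [this, sh_add_right, ih]

lemma sh_comm (c d : FPS m) : ∀ w : Word m, sh c d w = sh d c w
  | [] => by simp [sh_nil]; ring
  | x :: w => by
      rw [sh_cons, sh_cons]
      rw [sh_comm (fun u => c (x :: u)) d w, sh_comm c (fun u => d (x :: u)) w]
      ring

lemma sh_assoc (a b c : FPS m) : ∀ w : Word m, sh (sh a b) c w = sh a (sh b c) w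
  | [] => by simp [sh_nil]; ring
  | x :: w => by
      rw [sh_cons, sh_cons (c := a)]
      have h1 : (fun u => sh a b (x :: u))
          = fun u => sh (fun v => a (x :: v)) b u + sh a (fun v => b (x :: v)) u := by
        funext u; rw [sh_cons]
      have h2 : (fun u => sh b c (x :: u))
          = fun u => sh (fun v => b (x :: v)) c u + sh b (fun v => c (x :: v)) u := by
        funext u; rw [sh_cons]
      rw [h1, h2, sh_add_left, sh_add_right]
      rw [sh_assoc (fun v => a (x :: v)) b c w, sh_assoc a (fun v => b (x :: v)) c w,
        sh_assoc a b (fun v => c (x :: v)) w]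
      ring

lemma sh_congr : ∀ (w : Word m) (a a' b b' : FPS m),
    (∀ u : Word m, u.length ≤ w.length → a u = a' u) →
    (∀ u : Word m, u.length ≤ w.length → b u = b' u) →
    sh a b w = sh a' b' w
  | [], a, a', b, b', ha, hb => by
      rw [sh_nil, sh_nil, ha [] (by simp), hb [] (by simp)]
  | x :: w, a, a', b, b', ha, hb => by
      rw [sh_cons, sh_cons]
      have h1 := sh_congr w (fun u => a (x :: u)) (fun u => a' (x :: u)) b b'
        (fun u hu => ha (x :: u) (by simpa using Nat.succ_le_succ hu))
        (fun u hu => hb u (le_trans hu (Nat.le_succ _)))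
      have h2 := sh_congr w a a' (fun u => b (x :: u)) (fun u => b' (x :: u))
        (fun u hu => ha u (le_trans hu (Nat.le_succ _)))
        (fun u hu => hb (x :: u) (by simpa using Nat.succ_le_succ hu))
      rw [h1, h2]

lemma sh_left_comm (f g h : FPS m) (w : Word m) :
    sh f (sh g h) w = sh g (sh f h) w := by
  rw [← sh_assoc, ← sh_assoc]
  exact sh_congr w (sh f g) (sh g f) h h (fun u _ => sh_comm f g u) (fun _ _ => rfl)

lemma sh_right_zero_of : ∀ (w : Word m) (c d : FPS m),
    (∀ v : Word m, v.length ≤ w.length → d v = 0) → sh c d w = 0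
  | [], c, d, h => by rw [sh_nil, h [] (by simp), mul_zero]
  | x :: w, c, d, h => by
      rw [sh_cons]
      rw [sh_right_zero_of w _ d (fun v hv => h v (le_trans hv (Nat.le_succ _))),
        sh_right_zero_of w c (fun u => d (x :: u))
          (fun v hv => h (x :: v) (by simpa using Nat.succ_le_succ hv))]
      ring

/-! ### Support of `wmc` -/

lemma wmc_len (e : FPST m m) : ∀ (η : Word m) (w : Word m),
    w.length < η.length → wmc e η w = 0
  | x :: η, [], h => by cases x <;> simp [wmc, lc]
  | none :: η, y :: u, h => by
      simp only [wmc, lc]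
      rcases eq_or_ne y (none : Letter m) with hy | hy
      · simp only [hy, if_pos rfl]
        exact wmc_len e η u (by simpa using Nat.lt_of_succ_lt_succ h)
      · simp [hy]
  | some i :: η, y :: u, h => by
      simp only [wmc, lc]
      rcases eq_or_ne y (some i : Letter m) with hy | hy
      · simp only [hy, if_pos rfl]
        exact sh_right_zero_of u (e i) (wmc e η)
          (fun v hv => wmc_len e η v (lt_of_le_of_lt hv (by simpa using Nat.lt_of_succ_lt_succ h)))
      · simp [hy]

/-! ### Truncated version of `mc` and basic recursions -/

/-- Truncation of the mixed composition sum at level `n`. -/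
def mcN (n : ℕ) (c : FPS m) (e : FPST m m) : FPS m := fun w =>
  ∑ k ∈ Finset.range (n + 1), ∑ η : Fin k → Letter m,
    c (List.ofFn η) * wmc e (List.ofFn η) w

lemma mc_eq_mcN {c : FPS m} {e : FPST m m} {w : Word m} {n : ℕ} (h : w.length ≤ n) :
    mc c e w = mcN n c e w := by
  unfold mc mcN
  refine Finset.sum_subset (by intro k hk; simp at hk ⊢; omega) ?_
  intro k _ hk
  simp only [Finset.mem_range, not_lt] at hk
  refine Finset.sum_eq_zero fun η _ => ?_
  rw [wmc_len e _ w (by simpa using hk), mul_zero]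

lemma sum_pi_succ {k : ℕ} (F : Word m → ℝ) :
    ∑ η : Fin (k + 1) → Letter m, F (List.ofFn η)
      = ∑ x : Letter m, ∑ η : Fin k → Letter m, F (x :: List.ofFn η) := by
  calc ∑ η : Fin (k + 1) → Letter m, F (List.ofFn η)
      = ∑ p : Letter m × (Fin k → Letter m), F (p.1 :: List.ofFn p.2) :=
        (Fintype.sum_equiv (Fin.consEquiv fun _ => Letter m)
          (fun p => F (p.1 :: List.ofFn p.2)) (fun η => F (List.ofFn η))
          (by intro p; simp [Fin.consEquiv, List.ofFn_succ])).symm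
    _ = ∑ x : Letter m, ∑ η : Fin k → Letter m, F (x :: List.ofFn η) :=
        Fintype.sum_prod_type _

lemma mc_nil (c : FPS m) (e : FPST m m) : mc c e [] = c [] := by
  simp [mc, wmc, unit]

lemma mc_cons_none (c : FPS m) (e : FPST m m) (w : Word m) :
    mc c e (none :: w) = mc (fun u => c (none :: u)) e w := by
  unfold mc
  simp only [List.length_cons]
  rw [Finset.sum_range_succ']
  have h0 : (∑ η : Fin 0 → Letter m,
      c (List.ofFn η) * wmc e (List.ofFn η) (none :: w)) = 0 := by
    simp [wmc, unit]
  rw [h0, add_zero]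
  refine Finset.sum_congr rfl fun k _ => ?_
  rw [sum_pi_succ (fun η => c η * wmc e η (none :: w))]
  rw [Fintype.sum_option]
  have hsome : ∀ i : Fin m, (∑ η : Fin k → Letter m,
      c (some i :: List.ofFn η) * wmc e (some i :: List.ofFn η) (none :: w)) = 0 := by
    intro i
    refine Finset.sum_eq_zero fun η _ => ?_
    simp [wmc, lc]
  rw [Finset.sum_eq_zero fun i _ => hsome i, add_zero]
  refine Finset.sum_congr rfl fun η _ => ?_
  simp [wmc, lc]

lemma mc_cons_some (c : FPS m) (e : FPST m m) (i : Fin m) (w : Word m) :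
    mc c e (some i :: w) = sh (e i) (mc (fun u => c (some i :: u)) e) w := by
  have key : mc c e (some i :: w)
      = ∑ k ∈ Finset.range (w.length + 1), ∑ η : Fin k → Letter m,
          c (some i :: List.ofFn η) * sh (e i) (wmc e (List.ofFn η)) w := by
    unfold mc
    simp only [List.length_cons]
    rw [Finset.sum_range_succ']
    have h0 : (∑ η : Fin 0 → Letter m,
        c (List.ofFn η) * wmc e (List.ofFn η) (some i :: w)) = 0 := by
      simp [wmc, unit]
    rw [h0, add_zero]
    refine Finset.sum_congr rfl fun k _ => ?_
    rw [sum_pi_succ (fun η => c η * wmc e η (some i :: w))]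
    rw [Fintype.sum_option]
    have hnone : (∑ η : Fin k → Letter m,
        c (none :: List.ofFn η) * wmc e (none :: List.ofFn η) (some i :: w)) = 0 := by
      refine Finset.sum_eq_zero fun η _ => ?_
      simp [wmc, lc]
    rw [hnone, zero_add]
    rw [Finset.sum_eq_single i]
    · refine Finset.sum_congr rfl fun η _ => ?_
      simp [wmc, lc]
    · intro j _ hj
      refine Finset.sum_eq_zero fun η _ => ?_
      have : (some i : Letter m) ≠ some j := by simpa [eq_comm] using hj
      simp [wmc, lc, this]
    · intro h; exact absurd (Finset.mem_univ i) h
  rw [key]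
  have hcongr : sh (e i) (mc (fun u => c (some i :: u)) e) w
      = sh (e i) (mcN w.length (fun u => c (some i :: u)) e) w := by
    refine sh_congr w _ _ _ _ (fun _ _ => rfl) (fun u hu => mc_eq_mcN hu)
  rw [hcongr]
  unfold mcN
  rw [sh_sum_right]
  refine Finset.sum_congr rfl fun k _ => ?_
  rw [sh_sum_right]
  refine Finset.sum_congr rfl fun η _ => ?_
  rw [sh_mul_right]

/-! ### Linearity of `mc` in its left argument -/

lemma mc_zero_left (e : FPST m m) (w : Word m) : mc (fun _ => 0) e w = 0 := by
  simp [mc]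

lemma mc_add_left (a b : FPS m) (e : FPST m m) (w : Word m) :
    mc (fun u => a u + b u) e w = mc a e w + mc b e w := by
  simp [mc, add_mul, Finset.sum_add_distrib]

lemma mc_mul_left (r : ℝ) (a : FPS m) (e : FPST m m) (w : Word m) :
    mc (fun u => r * a u) e w = r * mc a e w := by
  simp [mc, mul_assoc, Finset.mul_sum]

lemma mc_sum_left {ι : Type*} (s : Finset ι) (f : ι → FPS m) (e : FPST m m) (w : Word m) :
    mc (fun u => ∑ j ∈ s, f j u) e w = ∑ j ∈ s, mc (f j) e w := by
  classical
  induction s using Finset.induction_on with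
  | empty => simpa using mc_zero_left e w
  | insert _ _ hj ih =>
      rename_i a s
      rw [Finset.sum_insert hj]
      have : (fun u => ∑ j ∈ insert a s, f j u) = fun u => f a u + ∑ j ∈ s, f j u := by
        funext u; rw [Finset.sum_insert hj]
      rw [this, mc_add_left, ih]

lemma mc_congr_left {a b : FPS m} (e : FPST m m) (w : Word m)
    (h : ∀ u : Word m, u.length ≤ w.length → a u = b u) :
    mc a e w = mc b e w := by
  unfold mc
  refine Finset.sum_congr rfl fun k hk => Finset.sum_congr rfl fun η _ => ?_
  rw [h (List.ofFn η) (by simp at hk ⊢; omega)]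

lemma mc_unit (e : FPST m m) (w : Word m) : mc (unit m) e w = unit m w := by
  unfold mc
  rw [Finset.sum_range_succ']
  have h1 : ∀ k ∈ Finset.range w.length, (∑ η : Fin (k + 1) → Letter m,
      unit m (List.ofFn η) * wmc e (List.ofFn η) w) = 0 := by
    intro k _
    refine Finset.sum_eq_zero fun η _ => ?_
    have : List.ofFn η ≠ [] := by
      intro h; have := congrArg List.length h; simp at this
    simp [unit, this]
  rw [Finset.sum_congr rfl h1, Finset.sum_const_zero, zero_add]
  simp [unit, wmc]

/-! ### `mc` is a shuffle homomorphism -/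

lemma mc_sh_aux (e : FPST m m) : ∀ (n : ℕ) (w : Word m), w.length ≤ n → ∀ a b : FPS m,
    mc (sh a b) e w = sh (mc a e) (mc b e) w
  | n, [], _, a, b => by
      rw [mc_nil, sh_nil, sh_nil, mc_nil, mc_nil]
  | 0, x :: w, h, a, b => by simp at h
  | n + 1, none :: w, h, a, b => by
      have hw : w.length ≤ n := by simpa using Nat.le_of_succ_le_succ h
      rw [mc_cons_none, sh_cons]
      have h1 : (fun u => sh a b (none :: u))
          = fun u => sh (fun v => a (none :: v)) b u + sh a (fun v => b (none :: v)) u := by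
        funext u; rw [sh_cons]
      rw [h1, mc_add_left]
      rw [mc_sh_aux e n w hw (fun v => a (none :: v)) b,
        mc_sh_aux e n w hw a (fun v => b (none :: v))]
      have h2 : (fun u => mc a e (none :: u)) = mc (fun v => a (none :: v)) e := by
        funext u; rw [mc_cons_none]
      have h3 : (fun u => mc b e (none :: u)) = mc (fun v => b (none :: v)) e := by
        funext u; rw [mc_cons_none]
      rw [h2, h3]
  | n + 1, some i :: w, h, a, b => by
      have hw : w.length ≤ n := by simpa using Nat.le_of_succ_le_succ h
      rw [mc_cons_some, sh_cons]
      have h1 : mc (fun u => sh a b (some i :: u)) e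
          = fun u => mc (sh (fun v => a (some i :: v)) b) e u
              + mc (sh a (fun v => b (some i :: v))) e u := by
        funext u
        have : (fun u => sh a b (some i :: u))
            = fun u => sh (fun v => a (some i :: v)) b u + sh a (fun v => b (some i :: v)) u := by
          funext v; rw [sh_cons]
        rw [this, mc_add_left]
      rw [h1, sh_add_right]
      have h2 : sh (e i) (mc (sh (fun v => a (some i :: v)) b) e) w
          = sh (e i) (sh (mc (fun v => a (some i :: v)) e) (mc b e)) w := by
        refine sh_congr w _ _ _ _ (fun _ _ => rfl) (fun u hu => ?_)
        exact mc_sh_aux e n u (le_trans hu hw) _ _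
      have h3 : sh (e i) (mc (sh a (fun v => b (some i :: v))) e) w
          = sh (e i) (sh (mc a e) (mc (fun v => b (some i :: v)) e)) w := by
        refine sh_congr w _ _ _ _ (fun _ _ => rfl) (fun u hu => ?_)
        exact mc_sh_aux e n u (le_trans hu hw) _ _
      rw [h2, h3, ← sh_assoc, sh_left_comm]
      have h4 : (fun u => mc a e (some i :: u))
          = sh (e i) (mc (fun v => a (some i :: v)) e) := by
        funext u; rw [mc_cons_some]
      have h5 : (fun u => mc b e (some i :: u))
          = sh (e i) (mc (fun v => b (some i :: v)) e) := by
        funext u; rw [mc_cons_some]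
      rw [h4, h5]

lemma mc_sh (e : FPST m m) (a b : FPS m) :
    mc (sh a b) e = sh (mc a e) (mc b e) :=
  funext fun w => mc_sh_aux e w.length w le_rfl a b

/-! ### `mc` on `lc` -/

lemma mc_lc_none (f : FPS m) (e : FPST m m) :
    mc (lc none f) e = lc none (mc f e) := by
  funext w
  match w with
  | [] => rw [mc_nil]; rfl
  | none :: u =>
      rw [mc_cons_none]
      have : (fun v => lc (none : Letter m) f (none :: v)) = f := by
        funext v; simp [lc]
      rw [this]; rfl
  | some i :: u =>
      rw [mc_cons_some]
      have : (fun v => lc (none : Letter m) f (some i :: v)) = fun _ => 0 := by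
        funext v; simp [lc]
      rw [this]
      have hz : mc (fun _ : Word m => 0) e = fun _ => 0 := funext fun v => mc_zero_left e v
      rw [hz, sh_zero_right]
      simp [lc]

lemma mc_lc_some (i : Fin m) (f : FPS m) (e : FPST m m) :
    mc (lc (some i) f) e = lc (some i) (sh (e i) (mc f e)) := by
  funext w
  match w with
  | [] => rw [mc_nil]; rfl
  | none :: u =>
      rw [mc_cons_none]
      have : (fun v => lc (some i : Letter m) f (none :: v)) = fun _ => 0 := by
        funext v; simp [lc]
      rw [this]
      rw [mc_zero_left]
      simp [lc]
  | some j :: u =>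
      rw [mc_cons_some]
      rcases eq_or_ne j i with hj | hj
      · subst hj
        have : (fun v => lc (some j : Letter m) f (some j :: v)) = f := by
          funext v; simp [lc]
        rw [this]; simp [lc]
      · have hne : (some j : Letter m) ≠ some i := by simpa using hj
        have : (fun v => lc (some i : Letter m) f (some j :: v)) = fun _ => 0 := by
          funext v; simp [lc, hne]
        rw [this]
        have hz : mc (fun _ : Word m => 0) e = fun _ => 0 := funext fun v => mc_zero_left e v
        rw [hz, sh_zero_right]
        simp [lc, hne]

/-! ### The key word-level identity -/

lemma wmc_comp (d e : FPST m m) : ∀ η : Word m,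
    mc (wmc d η) e = wmc (star d e) η
  | [] => funext fun w => by rw [show wmc d [] = unit m from rfl, mc_unit]; rfl
  | (none :: η) => by
      rw [show wmc d (none :: η) = lc none (wmc d η) from rfl, mc_lc_none,
        wmc_comp d e η]
      rfl
  | (some i :: η) => by
      rw [show wmc d (some i :: η) = lc (some i) (sh (d i) (wmc d η)) from rfl,
        mc_lc_some, mc_sh, wmc_comp d e η]
      have : sh (e i) (sh (mc (d i) e) (wmc (star d e) η))
          = sh (sh (e i) (mc (d i) e)) (wmc (star d e) η) :=
        funext fun w => (sh_assoc _ _ _ w).symm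
      rw [this]
      rfl

end CFSAux

open CFS in
/-- `(c ⟲ d) ⟲ e = c ⟲ (d ⋆ e)`: `⟲` is a right action of the monoid
`(ℝ^m⟨⟨X⟩⟩, ⋆, 1l)` on `ℝ^q⟨⟨X⟩⟩`. -/
theorem mixedComp_right_action (m q : ℕ) (c : FPST m q) (d e : FPST m m) :
    mcT (mcT c d) e = mcT c (star d e) := by
  funext i w
  show mc (mc (c i) d) e w = mc (c i) (star d e) w
  have h1 : mc (mc (c i) d) e w = mc (CFSAux.mcN w.length (c i) d) e w :=
    CFSAux.mc_congr_left e w fun u hu => CFSAux.mc_eq_mcN hu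
  have h2 : mc (c i) (star d e) w = CFSAux.mcN w.length (c i) (star d e) w :=
    CFSAux.mc_eq_mcN le_rfl
  rw [h1, h2]
  show mc (fun u => ∑ k ∈ Finset.range (w.length + 1), ∑ η : Fin k → Letter m,
      (c i) (List.ofFn η) * wmc d (List.ofFn η) u) e w = _
  rw [CFSAux.mc_sum_left]
  unfold CFSAux.mcN
  refine Finset.sum_congr rfl fun k _ => ?_
  rw [CFSAux.mc_sum_left Finset.univ
    (fun (η : Fin k → Letter m) => fun u => (c i) (List.ofFn η) * wmc d (List.ofFn η) u) e w]
  refine Finset.sum_congr rfl fun η _ => ?_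
  rw [CFSAux.mc_mul_left, CFSAux.wmc_comp]
end

section
/- Let X = {x_0,...,x_m} and let M^m := {c ∈ ℝ^m⟨⟨X⟩⟩ : c_i(𝟙) = 1 for all i}. Then M^m is a normal subgroup of the group of purely improper tuples in ℝ^m⟨⟨X⟩⟩ under the multiplicative composition product ⋆ with identity 1l = (𝟙,...,𝟙). -/
open scoped BigOperators

open CFS in
lemma star_nil {m : ℕ} (c d : FPST m m) (i : Fin m) :
    star c d i [] = d i [] * c i [] := by
  have hmc : mc (c i) d [] = c i [] := by
    simp [mc, wmc, unit]
  simp [CFS.star, sh, hmc]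

open CFS in
/-- `M^m = {c : c_i(𝟙) = 1 for all i}` is a normal subgroup of the
group of purely improper tuples under `⋆`: it contains `1l`, is closed under `⋆` and
under taking `⋆`-inverses, and is stable under conjugation by purely improper tuples. -/
theorem M_normal_subgroup (m : ℕ) :
    (∀ i, unitT m m i [] = 1) ∧
    (∀ c d : FPST m m, (∀ i, c i [] = 1) → (∀ i, d i [] = 1) →
      ∀ i, star c d i [] = 1) ∧
    (∀ c : FPST m m, (∀ i, c i [] = 1) →
      ∀ e : FPST m m, star c e = unitT m m ∧ star e c = unitT m m →
        ∀ i, e i [] = 1) ∧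
    (∀ g : FPST m m, PurelyImproper g →
      ∀ ginv : FPST m m, star g ginv = unitT m m ∧ star ginv g = unitT m m →
        ∀ c : FPST m m, (∀ i, c i [] = 1) →
          ∀ i, star (star g c) ginv i [] = 1) := by
  refine ⟨fun i => rfl, ?_, ?_, ?_⟩
  · intro c d hc hd i
    rw [star_nil, hc, hd, mul_one]
  · intro c hc e ⟨h1, h2⟩ i
    have := congrFun (congrFun h2 i) []
    rw [star_nil, hc i, one_mul] at this
    simpa [unitT, unit] using this
  · intro g hg ginv ⟨h1, h2⟩ c hc i
    have hgi := congrFun (congrFun h2 i) []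
    rw [star_nil] at hgi
    simp only [unitT, unit, if_pos rfl, if_true] at hgi
    rw [star_nil, star_nil, hc i, one_mul, mul_comm]
    exact hgi
end
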